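/- Verification of approximate current-state opacity: a metric system S is δ-approximate current-state opaque if and only if every reachable state (x,q) of its δ-approximate current-state estimator S_C satisfies q ⊄ X_S. -/

import Mathlib

open Metric Set

section OpacityDefs

variable {X U Y Xa Ua Xb Ub Xc Uc : Type*}

/-- A run of length `n` of the system with transition relation `tr`
(each step uses some input). -/
def IsRun (tr : X → U → X → Prop) (n : ℕ) (x : ℕ → X) : Prop :=
  ∀ i < n, ∃ u, tr (x i) u (x (i + 1))

/-- Exact initial-state opacity. -/
def ExactInitOpaque {Y : Type*} (X0 XS : Set X) (tr : X → U → X → Prop)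
    (H : X → Y) : Prop :=
  ∀ n : ℕ, ∀ x : ℕ → X, x 0 ∈ X0 ∩ XS → IsRun tr n x →
    ∃ x' : ℕ → X, x' 0 ∈ X0 \ XS ∧ IsRun tr n x' ∧ ∀ i ≤ n, H (x i) = H (x' i)

/-- δ-approximate initial-state opacity. -/
def ApproxInitOpaque [MetricSpace Y] (X0 XS : Set X) (tr : X → U → X → Prop)
    (H : X → Y) (δ : ℝ) : Prop :=
  ∀ n : ℕ, ∀ x : ℕ → X, x 0 ∈ X0 ∩ XS → IsRun tr n x →
    ∃ x' : ℕ → X, x' 0 ∈ X0 \ XS ∧ IsRun tr n x' ∧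
      ∀ i ≤ n, dist (H (x i)) (H (x' i)) ≤ δ

/-- δ-approximate current-state opacity. -/
def ApproxCurOpaque [MetricSpace Y] (X0 XS : Set X) (tr : X → U → X → Prop)
    (H : X → Y) (δ : ℝ) : Prop :=
  ∀ n : ℕ, ∀ x : ℕ → X, x 0 ∈ X0 → IsRun tr n x → x n ∈ XS →
    ∃ x' : ℕ → X, x' 0 ∈ X0 ∧ IsRun tr n x' ∧ x' n ∉ XS ∧
      ∀ i ≤ n, dist (H (x i)) (H (x' i)) ≤ δ

/-- δ-approximate infinite-step opacity. -/
def ApproxInfOpaque [MetricSpace Y] (X0 XS : Set X) (tr : X → U → X → Prop)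
    (H : X → Y) (δ : ℝ) : Prop :=
  ∀ n : ℕ, ∀ x : ℕ → X, ∀ k ≤ n, x 0 ∈ X0 → IsRun tr n x → x k ∈ XS →
    ∃ x' : ℕ → X, x' 0 ∈ X0 ∧ IsRun tr n x' ∧ x' k ∉ XS ∧
      ∀ i ≤ n, dist (H (x i)) (H (x' i)) ≤ δ

/-- Standing assumption: no initial state has all its δ-close initial states secret. -/
def StandingAssumption [MetricSpace Y] (X0 XS : Set X) (H : X → Y) (δ : ℝ) : Prop :=
  ∀ x0 ∈ X0, ¬ ({x ∈ X0 | dist (H x0) (H x) ≤ δ} ⊆ XS)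

/-- Predecessors of a set of states (under any input). -/
def PreSet (tr : X → U → X → Prop) (q : Set X) : Set X :=
  {z | ∃ u, ∃ w ∈ q, tr z u w}

/-- Successors of a set of states (under any input). -/
def PostSet (tr : X → U → X → Prop) (q : Set X) : Set X :=
  {z | ∃ u, ∃ w ∈ q, tr w u z}

/-- Initial states of the δ-approximate initial-state estimator. -/
def InitEstInit [MetricSpace Y] (H : X → Y) (δ : ℝ) : Set (X × Set X) :=
  {p | p.2 = {x' | dist (H p.1) (H x') ≤ δ}}

/-- Transition relation of the δ-approximate initial-state estimator. -/
def InitEstTr [MetricSpace Y] (tr : X → U → X → Prop) (H : X → Y) (δ : ℝ)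
    (p : X × Set X) (u : U) (p' : X × Set X) : Prop :=
  tr p'.1 u p.1 ∧ p'.2 = PreSet tr p.2 ∩ {x'' | dist (H p'.1) (H x'') ≤ δ}

/-- Reachable states of the δ-approximate initial-state estimator. -/
def InitEstReach [MetricSpace Y] (tr : X → U → X → Prop) (H : X → Y) (δ : ℝ) :
    Set (X × Set X) :=
  {p | ∃ (n : ℕ) (pr : ℕ → X × Set X) (u : ℕ → U), pr 0 ∈ InitEstInit H δ ∧
    (∀ i < n, InitEstTr tr H δ (pr i) (u i) (pr (i + 1))) ∧ pr n = p}

/-- Initial states of the δ-approximate current-state estimator. -/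
def CurEstInit [MetricSpace Y] (X0 : Set X) (H : X → Y) (δ : ℝ) : Set (X × Set X) :=
  {p | p.1 ∈ X0 ∧ p.2 = {x' ∈ X0 | dist (H p.1) (H x') ≤ δ}}

/-- Transition relation of the δ-approximate current-state estimator. -/
def CurEstTr [MetricSpace Y] (tr : X → U → X → Prop) (H : X → Y) (δ : ℝ)
    (p : X × Set X) (u : U) (p' : X × Set X) : Prop :=
  tr p.1 u p'.1 ∧ p'.2 = PostSet tr p.2 ∩ {x'' | dist (H p'.1) (H x'') ≤ δ}

/-- Reachable states of the δ-approximate current-state estimator. -/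
def CurEstReach [MetricSpace Y] (X0 : Set X) (tr : X → U → X → Prop) (H : X → Y)
    (δ : ℝ) : Set (X × Set X) :=
  {p | ∃ (n : ℕ) (pr : ℕ → X × Set X) (u : ℕ → U), pr 0 ∈ CurEstInit X0 H δ ∧
    (∀ i < n, CurEstTr tr H δ (pr i) (u i) (pr (i + 1))) ∧ pr n = p}

/-- ε-approximate initial-state opacity preserving simulation relation from
system `a` to system `b`. -/
def InitSOPSim [MetricSpace Y] (Xa0 XaS : Set Xa) (tra : Xa → Ua → Xa → Prop)
    (Ha : Xa → Y) (Xb0 XbS : Set Xb) (trb : Xb → Ub → Xb → Prop) (Hb : Xb → Y)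
    (ε : ℝ) (R : Set (Xa × Xb)) : Prop :=
  (∀ xa0 ∈ Xa0 ∩ XaS, ∃ xb0 ∈ Xb0 ∩ XbS, (xa0, xb0) ∈ R) ∧
  (∀ xb0 ∈ Xb0 \ XbS, ∃ xa0 ∈ Xa0 \ XaS, (xa0, xb0) ∈ R) ∧
  (∀ p ∈ R, dist (Ha p.1) (Hb p.2) ≤ ε) ∧
  (∀ p ∈ R, ∀ (ua : Ua) (xa' : Xa), tra p.1 ua xa' →
    ∃ (ub : Ub) (xb' : Xb), trb p.2 ub xb' ∧ (xa', xb') ∈ R) ∧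
  (∀ p ∈ R, ∀ (ub : Ub) (xb' : Xb), trb p.2 ub xb' →
    ∃ (ua : Ua) (xa' : Xa), tra p.1 ua xa' ∧ (xa', xb') ∈ R)

/-- ε-approximate current-state opacity preserving simulation relation from
system `a` to system `b`. -/
def CurSOPSim [MetricSpace Y] (Xa0 XaS : Set Xa) (tra : Xa → Ua → Xa → Prop)
    (Ha : Xa → Y) (Xb0 XbS : Set Xb) (trb : Xb → Ub → Xb → Prop) (Hb : Xb → Y)
    (ε : ℝ) (R : Set (Xa × Xb)) : Prop :=
  (∀ xa0 ∈ Xa0, ∃ xb0 ∈ Xb0, (xa0, xb0) ∈ R) ∧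
  (∀ p ∈ R, dist (Ha p.1) (Hb p.2) ≤ ε) ∧
  (∀ p ∈ R, ∀ (ua : Ua) (xa' : Xa), tra p.1 ua xa' →
    ∃ (ub : Ub) (xb' : Xb), trb p.2 ub xb' ∧ (xa', xb') ∈ R) ∧
  (∀ p ∈ R, ∀ (ua : Ua) (xa' : Xa), tra p.1 ua xa' → xa' ∈ XaS →
    ∃ (ub : Ub) (xb' : Xb), trb p.2 ub xb' ∧ xb' ∈ XbS ∧ (xa', xb') ∈ R) ∧
  (∀ p ∈ R, ∀ (ub : Ub) (xb' : Xb), trb p.2 ub xb' →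
    ∃ (ua : Ua) (xa' : Xa), tra p.1 ua xa' ∧ (xa', xb') ∈ R) ∧
  (∀ p ∈ R, ∀ (ub : Ub) (xb' : Xb), trb p.2 ub xb' → xb' ∉ XbS →
    ∃ (ua : Ua) (xa' : Xa), tra p.1 ua xa' ∧ xa' ∉ XaS ∧ (xa', xb') ∈ R)

/-- ε-approximate infinite-step opacity preserving simulation relation:
simultaneously an ε-InitSOP and an ε-CurSOP simulation relation. -/
def InfSOPSim [MetricSpace Y] (Xa0 XaS : Set Xa) (tra : Xa → Ua → Xa → Prop)
    (Ha : Xa → Y) (Xb0 XbS : Set Xb) (trb : Xb → Ub → Xb → Prop) (Hb : Xb → Y)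
    (ε : ℝ) (R : Set (Xa × Xb)) : Prop :=
  InitSOPSim Xa0 XaS tra Ha Xb0 XbS trb Hb ε R ∧
  CurSOPSim Xa0 XaS tra Ha Xb0 XbS trb Hb ε R

end OpacityDefs

/-
The estimator's second component is exactly the set of endpoints of runs from `X0` that stay
δ-close, in output, to the run traced by its first component: both satisfy the same recursion
`q₀ = X0 ∩ B(x₀)`, `qₙ₊₁ = Post(qₙ) ∩ B(xₙ₊₁)`. Opacity asks that this set never be contained
in `XS` when `xₙ ∈ XS`, which is the estimator condition. Reaching an estimator state of a run
of length 0 needs an input, so that case is settled by the standing assumption instead.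
-/

section CloseRuns

variable {X U Y : Type*} [MetricSpace Y] {X0 : Set X} {tr : X → U → X → Prop} {H : X → Y}
  {δ : ℝ} {n : ℕ} {x : ℕ → X}

lemma IsRun.mono {m : ℕ} (h : IsRun tr n x) (hmn : m ≤ n) : IsRun tr m x :=
  fun i hi => h i (lt_of_lt_of_le hi hmn)

lemma IsRun.update_succ {u : U} {z : X} (h : IsRun tr n x) (hz : tr (x n) u z) :
    IsRun tr (n + 1) (Function.update x (n + 1) z) := by
  intro i hi
  rcases Nat.lt_succ_iff_lt_or_eq.mp hi with hi | rfl
  · simpa [Function.update_of_ne (by omega : i ≠ n + 1),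
      Function.update_of_ne (by omega : i + 1 ≠ n + 1)] using h i hi
  · exact ⟨u, by simpa [Function.update_of_ne (by omega : i ≠ i + 1)] using hz⟩

variable (X0 tr H δ) in
def closeRunEnds (n : ℕ) (x : ℕ → X) : Set X :=
  {z | ∃ x' : ℕ → X, x' 0 ∈ X0 ∧ IsRun tr n x' ∧ x' n = z ∧
    ∀ i ≤ n, dist (H (x i)) (H (x' i)) ≤ δ}

lemma mem_closeRunEnds_self (hδ : 0 ≤ δ) (hx0 : x 0 ∈ X0) (hrun : IsRun tr n x) :
    x n ∈ closeRunEnds X0 tr H δ n x :=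
  ⟨x, hx0, hrun, rfl, fun i _ => (dist_self (H (x i))).trans_le hδ⟩

lemma closeRunEnds_zero (x : ℕ → X) :
    closeRunEnds X0 tr H δ 0 x = {z ∈ X0 | dist (H (x 0)) (H z) ≤ δ} := by
  ext z
  constructor
  · rintro ⟨x', hx0, -, rfl, hd⟩
    exact ⟨hx0, hd 0 le_rfl⟩
  · rintro ⟨hz0, hdz⟩
    exact ⟨fun _ => z, hz0, fun i hi => absurd hi i.not_lt_zero, rfl,
      fun i hi => by rwa [Nat.le_zero.mp hi]⟩

lemma closeRunEnds_succ (n : ℕ) (x : ℕ → X) :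
    closeRunEnds X0 tr H δ (n + 1) x =
      PostSet tr (closeRunEnds X0 tr H δ n x) ∩ {z | dist (H (x (n + 1))) (H z) ≤ δ} := by
  ext z
  constructor
  · rintro ⟨x', hx0, hrun, rfl, hd⟩
    obtain ⟨u, hu⟩ := hrun n n.lt_succ_self
    exact ⟨⟨u, x' n, ⟨x', hx0, hrun.mono n.le_succ, rfl, fun i hi => hd i (hi.trans n.le_succ)⟩,
      hu⟩, hd (n + 1) le_rfl⟩
  · rintro ⟨⟨u, _, ⟨x', hx0, hrun, rfl, hd⟩, hu⟩, hdz⟩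
    refine ⟨Function.update x' (n + 1) z, ?_, hrun.update_succ hu, by simp, ?_⟩
    · simpa [Function.update_of_ne (n.succ_ne_zero).symm] using hx0
    · intro i hi
      rcases Nat.le_succ_iff.mp hi with hi | rfl
      · simpa [Function.update_of_ne (by omega : i ≠ n + 1)] using hd i hi
      · simpa using hdz

end CloseRuns

section Estimator

variable {X U Y : Type*} [MetricSpace Y] {X0 XS : Set X} {tr : X → U → X → Prop} {H : X → Y}
  {δ : ℝ}

lemma approxCurOpaque_iff_not_closeRunEnds_subset :
    ApproxCurOpaque X0 XS tr H δ ↔ ∀ n (x : ℕ → X), x 0 ∈ X0 → IsRun tr n x → x n ∈ XS →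
      ¬ closeRunEnds X0 tr H δ n x ⊆ XS := by
  simp only [ApproxCurOpaque, closeRunEnds, Set.not_subset]
  refine forall₄_congr fun n x _ _ => imp_congr_right fun _ => ⟨?_, ?_⟩
  · rintro ⟨x', hx0, hrun, hxS, hd⟩
    exact ⟨x' n, ⟨x', hx0, hrun, rfl, hd⟩, hxS⟩
  · rintro ⟨_, ⟨x', hx0, hrun, rfl, hd⟩, hxS⟩
    exact ⟨x', hx0, hrun, hxS, hd⟩

lemma snd_eq_closeRunEnds_of_curEstTr {pr : ℕ → X × Set X} {u : ℕ → U}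
    (h0 : pr 0 ∈ CurEstInit X0 H δ) :
    ∀ {n}, (∀ i < n, CurEstTr tr H δ (pr i) (u i) (pr (i + 1))) →
      (pr n).2 = closeRunEnds X0 tr H δ n (fun i => (pr i).1)
  | 0, _ => by rw [closeRunEnds_zero, h0.2]
  | n + 1, hstep => by
    rw [closeRunEnds_succ, (hstep n n.lt_succ_self).2,
      snd_eq_closeRunEnds_of_curEstTr h0 fun i hi => hstep i (hi.trans n.lt_succ_self)]

lemma exists_isRun_of_mem_curEstReach {p : X × Set X} (hp : p ∈ CurEstReach X0 tr H δ) :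
    ∃ n, ∃ x : ℕ → X, x 0 ∈ X0 ∧ IsRun tr n x ∧ p = (x n, closeRunEnds X0 tr H δ n x) := by
  obtain ⟨n, pr, u, h0, hstep, rfl⟩ := hp
  exact ⟨n, fun i => (pr i).1, h0.1, fun i hi => ⟨u i, (hstep i hi).1⟩,
    Prod.ext rfl (snd_eq_closeRunEnds_of_curEstTr h0 hstep)⟩

lemma mem_curEstReach_of_isRun [Nonempty U] {n : ℕ} {x : ℕ → X} (hx0 : x 0 ∈ X0)
    (hrun : IsRun tr n x) : (x n, closeRunEnds X0 tr H δ n x) ∈ CurEstReach X0 tr H δ := by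
  have hinput : ∀ i, ∃ u : U, i < n → tr (x i) u (x (i + 1)) := fun i =>
    if hi : i < n then (hrun i hi).imp fun _ hu _ => hu
    else ⟨Classical.arbitrary U, fun h => absurd h hi⟩
  choose u hu using hinput
  exact ⟨n, fun i => (x i, closeRunEnds X0 tr H δ i x), u, ⟨hx0, closeRunEnds_zero x⟩,
    fun i hi => ⟨hu i hi, closeRunEnds_succ i x⟩, rfl⟩

end Estimator

theorem approx_cur_opaque_iff_estimator {X U Y : Type*} [MetricSpace Y]
    (X0 XS : Set X) (tr : X → U → X → Prop) (H : X → Y) {δ : ℝ} (hδ : 0 ≤ δ)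
    (hsa : StandingAssumption X0 XS H δ) :
    ApproxCurOpaque X0 XS tr H δ ↔
      ∀ p ∈ CurEstReach X0 tr H δ, ¬ (p.2 ⊆ XS) := by
  rw [approxCurOpaque_iff_not_closeRunEnds_subset]
  constructor
  · rintro hop p hp hsub
    obtain ⟨n, x, hx0, hrun, rfl⟩ := exists_isRun_of_mem_curEstReach hp
    exact hop n x hx0 hrun (hsub (mem_closeRunEnds_self hδ hx0 hrun)) hsub
  · rintro hest (_ | n) x hx0 hrun -
    · rw [closeRunEnds_zero]
      exact hsa (x 0) hx0
    · have : Nonempty U := ⟨(hrun 0 n.succ_pos).choose⟩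
      exact hest _ (mem_curEstReach_of_isRun hx0 hrun)
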